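/- On a quasi-para-Sasakian manifold, ∇_ξ φ = 0, ∇_ξ ξ = 0, and ∇_ξ η = 0. -/

import Mathlib

/-- An abstract context for a (2n+1)-dimensional almost paracontact metric manifold:
`C` plays the role of the ring of smooth functions, `V` the module of vector fields,
with Lie bracket `bracket`, the derivation action `act` of vector fields on functions,
a (pseudo-Riemannian, nondegenerate) metric `g`, its Levi-Civita connection `nabla`
(characterized by being torsion-free and metric), and an almost paracontact metric
structure `(phi, xi, eta)`:  `φ² = Id − η ⊗ ξ`, `η(ξ) = 1`,
`g(φX, φY) = −g(X,Y) + η(X)η(Y)`. -/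
structure QPSCtx (C V : Type*) [CommRing C] [Algebra ℝ C]
    [AddCommGroup V] [Module C V] where
  bracket : V → V → V
  act : V → C → C
  act_add : ∀ X f₁ f₂, act X (f₁ + f₂) = act X f₁ + act X f₂
  act_mul : ∀ X f₁ f₂, act X (f₁ * f₂) = f₁ * act X f₂ + f₂ * act X f₁
  g : V → V → C
  g_symm : ∀ X Y, g X Y = g Y X
  g_addl : ∀ X Y Z, g (X + Y) Z = g X Z + g Y Z
  g_smull : ∀ (f : C) X Y, g (f • X) Y = f * g X Y
  g_nondeg : ∀ X, (∀ Y, g X Y = 0) → X = 0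
  nabla : V → V → V
  nabla_addl : ∀ X Y Z, nabla (X + Y) Z = nabla X Z + nabla Y Z
  nabla_addr : ∀ X Y Z, nabla X (Y + Z) = nabla X Y + nabla X Z
  nabla_smull : ∀ (f : C) X Y, nabla (f • X) Y = f • nabla X Y
  nabla_leibniz : ∀ X (f : C) Y, nabla X (f • Y) = act X f • Y + f • nabla X Y
  torsion_free : ∀ X Y, nabla X Y - nabla Y X = bracket X Y
  metric_compat : ∀ X Y Z, act X (g Y Z) = g (nabla X Y) Z + g Y (nabla X Z)
  phi : V → V
  phi_add : ∀ X Y, phi (X + Y) = phi X + phi Y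
  phi_smul : ∀ (f : C) X, phi (f • X) = f • phi X
  xi : V
  eta : V → C
  eta_add : ∀ X Y, eta (X + Y) = eta X + eta Y
  eta_smul : ∀ (f : C) X, eta (f • X) = f * eta X
  phi_sq : ∀ X, phi (phi X) = X - eta X • xi
  eta_xi : eta xi = 1
  compat : ∀ X Y, g (phi X) (phi Y) = - g X Y + eta X * eta Y

namespace QPSCtx
variable {C V : Type*} [CommRing C] [Algebra ℝ C] [AddCommGroup V] [Module C V]
variable (P : QPSCtx C V)

/-- The `(1,1)`-tensor `A X = ∇_X ξ`. -/
def A (X : V) : V := P.nabla X P.xi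

/-- The fundamental 2-form `Φ(X,Y) = g(X, φY)`. -/
def Phi (X Y : V) : C := P.g X (P.phi Y)

/-- `2 dη(X,Y) = X(η Y) − Y(η X) − η [X,Y]`. -/
def twoDeta (X Y : V) : C :=
  P.act X (P.eta Y) - P.act Y (P.eta X) - P.eta (P.bracket X Y)

/-- The Nijenhuis torsion `[φ,φ](X,Y) = φ²[X,Y] + [φX,φY] − φ[φX,Y] − φ[X,φY]`. -/
def nij (X Y : V) : V :=
  P.phi (P.phi (P.bracket X Y)) + P.bracket (P.phi X) (P.phi Y)
    - P.phi (P.bracket (P.phi X) Y) - P.phi (P.bracket X (P.phi Y))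

/-- Normality: `N⁽¹⁾(X,Y) = [φ,φ](X,Y) − 2dη(X,Y) ξ = 0`. -/
def Normal : Prop := ∀ X Y, P.nij X Y - P.twoDeta X Y • P.xi = 0

/-- Closedness of the fundamental 2-form: `3 dΦ(X,Y,Z) = 0`. -/
def PhiClosed : Prop := ∀ X Y Z,
  P.act X (P.Phi Y Z) - P.act Y (P.Phi X Z) + P.act Z (P.Phi X Y)
    - P.Phi (P.bracket X Y) Z + P.Phi (P.bracket X Z) Y - P.Phi (P.bracket Y Z) X = 0

/-- Quasi-para-Sasakian: normal almost paracontact metric with closed fundamental form. -/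
def QPS : Prop := P.Normal ∧ P.PhiClosed

/-- Para-Sasakian: normal with `Φ = dη`. -/
def ParaSasakian : Prop := P.Normal ∧ ∀ X Y, 2 * P.Phi X Y = P.twoDeta X Y

/-- The curvature tensor `R(X,Y)Z = ∇_X ∇_Y Z − ∇_Y ∇_X Z − ∇_{[X,Y]} Z`. -/
def R (X Y Z : V) : V :=
  P.nabla X (P.nabla Y Z) - P.nabla Y (P.nabla X Z) - P.nabla (P.bracket X Y) Z

/-- The deformed 1-form `η̃ = α η`. -/
def etaT (α : ℝ) (X : V) : C := algebraMap ℝ C α * P.eta X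

/-- The deformed Reeb field `ξ̃ = ξ / α`. -/
noncomputable def xiT (α : ℝ) : V := (algebraMap ℝ C α⁻¹) • P.xi

/-- The deformed metric `g̃ = β g + (α² − β) η ⊗ η`. -/
def gT (α β : ℝ) (X Y : V) : C :=
  algebraMap ℝ C β * P.g X Y + algebraMap ℝ C (α ^ 2 - β) * (P.eta X * P.eta Y)

/-- The deformed fundamental form `Φ̃(X,Y) = g̃(X, φ Y)`. -/
def PhiT (α β : ℝ) (X Y : V) : C := P.gT α β X (P.phi Y)

end QPSCtx

/-!
Over a general coefficient ring the structure equations only give `φ ξ = c ξ` with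
`c = η(φ ξ)` and `c² = 0` (so `η ∘ φ = c η` rather than `0`). Closedness of `Φ` makes `c` and
`c η` constant along every vector field, and this is what makes the error terms in `c` cancel.

Write `A X = ∇_X ξ`. The `η`-component of normality at `(ξ, Y)` gives `dη(ξ, ·) = 0`, i.e.
`η [ξ, Y] = ξ (η Y)`, and metric compatibility turns this into `∇_ξ ξ = 0` and `∇_ξ η = 0`.
Normality at `(ξ, Y)` also gives `[ξ, φY] = φ [ξ, Y]`, so that
`(∇_ξ φ) Y = A (φY) - φ (A Y)`. Finally `S(Y, Z) = g(A (φY), Z) + g(A Y, φZ)` is symmetric by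
the `η`-component of normality at `(Y, φZ)` and antisymmetric by `dΦ(ξ, Y, Z) = 0`, so `S = 0`
and `A` commutes with `φ`.
-/

lemma eq_zero_of_add_self_eq_zero {M : Type*} [AddCommGroup M] [Module ℝ M] {x : M}
    (h : x + x = 0) : x = 0 := by
  have : (2 : ℝ) • x = 0 := by rw [two_smul, h]
  simpa using this

namespace QPSCtx

variable {C V : Type*} [CommRing C] [Algebra ℝ C] [AddCommGroup V] [Module C V]
variable (P : QPSCtx C V)

def c : C := P.eta (P.phi P.xi)

lemma g_smulr (f : C) (X Y : V) : P.g X (f • Y) = f * P.g X Y := by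
  rw [P.g_symm, P.g_smull, P.g_symm]

lemma g_addr (X Y Z : V) : P.g X (Y + Z) = P.g X Y + P.g X Z := by
  rw [P.g_symm, P.g_addl, P.g_symm Y, P.g_symm Z]

lemma g_zerol (Y : V) : P.g 0 Y = 0 :=
  (AddMonoidHom.mk' (P.g · Y) (P.g_addl · · Y)).map_zero

lemma g_subl (X Y Z : V) : P.g (X - Y) Z = P.g X Z - P.g Y Z :=
  (AddMonoidHom.mk' (P.g · Z) (P.g_addl · · Z)).map_sub X Y

lemma g_subr (X Y Z : V) : P.g X (Y - Z) = P.g X Y - P.g X Z := by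
  rw [P.g_symm, P.g_subl, P.g_symm Y, P.g_symm Z]

lemma eta_zero : P.eta 0 = 0 := (AddMonoidHom.mk' P.eta P.eta_add).map_zero

lemma eta_sub (X Y : V) : P.eta (X - Y) = P.eta X - P.eta Y :=
  (AddMonoidHom.mk' P.eta P.eta_add).map_sub X Y

lemma phi_zero : P.phi 0 = 0 := (AddMonoidHom.mk' P.phi P.phi_add).map_zero

lemma phi_sub (X Y : V) : P.phi (X - Y) = P.phi X - P.phi Y :=
  (AddMonoidHom.mk' P.phi P.phi_add).map_sub X Y

lemma act_one (X : V) : P.act X 1 = 0 := by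
  have h := P.act_mul X 1 1
  rw [mul_one, one_mul] at h
  linear_combination -h

lemma nabla_subl (X Y Z : V) : P.nabla (X - Y) Z = P.nabla X Z - P.nabla Y Z :=
  (AddMonoidHom.mk' (P.nabla · Z) (P.nabla_addl · · Z)).map_sub X Y

lemma bracket_self (X : V) : P.bracket X X = 0 := by
  rw [← P.torsion_free, sub_self]

lemma nabla_xi (Y : V) : P.nabla P.xi Y = P.bracket P.xi Y + P.A Y := by
  rw [← P.torsion_free, A, sub_add_cancel]

lemma phi_phi_xi : P.phi (P.phi P.xi) = 0 := by
  rw [P.phi_sq, P.eta_xi, one_smul, sub_self]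

lemma phi_xi : P.phi P.xi = P.c • P.xi := by
  have h := P.phi_sq (P.phi P.xi)
  rw [P.phi_phi_xi, P.phi_zero] at h
  exact sub_eq_zero.mp h.symm

lemma c_mul_self : P.c * P.c = 0 := by
  have h := congrArg P.phi P.phi_xi
  rw [P.phi_phi_xi, P.phi_smul, P.phi_xi, smul_smul] at h
  have h' := congrArg P.eta h
  rwa [P.eta_zero, P.eta_smul, P.eta_xi, mul_one, eq_comm] at h'

lemma eta_phi (X : V) : P.eta (P.phi X) = P.c * P.eta X := by
  have h := congrArg P.eta ((P.phi_sq (P.phi X)).symm.trans (congrArg P.phi (P.phi_sq X)))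
  rw [P.phi_sub, P.phi_smul, P.phi_xi, smul_smul, P.eta_sub, P.eta_sub, P.eta_smul,
    P.eta_smul, P.eta_xi, mul_one, mul_one] at h
  linear_combination -h

lemma g_xi (X : V) : P.g X P.xi = P.eta X := by
  have hφξ : ∀ Y, P.g (P.phi P.xi) Y = P.c * P.eta Y := by
    intro Y
    have h := P.compat (P.phi P.xi) Y
    rw [P.phi_phi_xi, P.g_zerol] at h
    rw [c]
    linear_combination h
  have h := P.compat P.xi X
  rw [P.eta_xi, one_mul, hφξ, P.eta_phi, P.g_symm] at h
  linear_combination h - P.eta X * P.c_mul_self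

lemma g_phi_left (X Y : V) :
    P.g (P.phi X) Y = - P.g X (P.phi Y) + 2 * P.c * P.eta X * P.eta Y := by
  have h := P.compat X (P.phi Y)
  rw [P.phi_sq Y, P.g_subr, P.g_smulr, P.g_xi, P.eta_phi, P.eta_phi] at h
  linear_combination h

lemma g_self_phi (X : V) : P.g X (P.phi X) = P.c * P.eta X * P.eta X := by
  have h := P.g_phi_left X X
  rw [P.g_symm (P.phi X) X] at h
  refine sub_eq_zero.mp (eq_zero_of_add_self_eq_zero ?_)
  linear_combination h

lemma g_A_xi (X : V) : P.g (P.A X) P.xi = 0 := by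
  have h : P.act X (P.g P.xi P.xi) = P.g (P.A X) P.xi + P.g P.xi (P.A X) :=
    P.metric_compat X P.xi P.xi
  rw [P.g_xi, P.eta_xi, P.act_one, P.g_symm P.xi] at h
  exact eq_zero_of_add_self_eq_zero h.symm

lemma eta_A (X : V) : P.eta (P.A X) = 0 := by
  rw [← P.g_xi, P.g_A_xi]

lemma act_eta (X Y : V) : P.act X (P.eta Y) = P.eta (P.nabla X Y) + P.g (P.A X) Y := by
  rw [← P.g_xi, P.metric_compat, P.g_xi, P.g_symm Y, A]

lemma twoDeta_eq (X Y : V) : P.twoDeta X Y = P.g (P.A X) Y - P.g (P.A Y) X := by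
  rw [twoDeta, P.act_eta, P.act_eta, ← P.torsion_free, P.eta_sub]
  ring

lemma act_g_self_phi (hΦ : P.PhiClosed) (X Z : V) : P.act Z (P.g X (P.phi X)) = 0 := by
  have h := hΦ X X Z
  simp only [Phi, P.bracket_self, P.g_zerol] at h
  linear_combination h

lemma act_c (hΦ : P.PhiClosed) (Z : V) : P.act Z P.c = 0 := by
  rw [← P.act_g_self_phi hΦ P.xi Z, P.g_symm, P.g_xi, c]

lemma act_c_mul_eta (hΦ : P.PhiClosed) (Z Y : V) : P.act Z (P.c * P.eta Y) = 0 := by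
  have h := P.act_g_self_phi hΦ (Y + P.xi) Z
  have hsplit : P.c * (P.eta Y + 1) * (P.eta Y + 1)
      = P.c * P.eta Y * P.eta Y + (P.c * P.eta Y + (P.c * P.eta Y + P.c)) := by ring
  rw [P.g_self_phi, P.eta_add, P.eta_xi, hsplit, P.act_add, P.act_add, P.act_add,
    ← P.g_self_phi, P.act_g_self_phi hΦ, P.act_c hΦ] at h
  apply eq_zero_of_add_self_eq_zero
  linear_combination h

lemma c_mul_act_eta (hΦ : P.PhiClosed) (Z Y : V) : P.c * P.act Z (P.eta Y) = 0 := by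
  have h := P.act_mul Z P.c (P.eta Y)
  rw [P.act_c_mul_eta hΦ, P.act_c hΦ] at h
  linear_combination -h

lemma c_mul_eta_bracket (hΦ : P.PhiClosed) (X Y : V) :
    P.c * P.eta (P.bracket X Y) = P.c * P.g (P.A Y) X - P.c * P.g (P.A X) Y := by
  have hX := P.c_mul_act_eta hΦ X Y
  have hY := P.c_mul_act_eta hΦ Y X
  rw [P.act_eta] at hX hY
  rw [← P.torsion_free, P.eta_sub]
  linear_combination hX - hY

lemma bracket_c_smul_xi (hΦ : P.PhiClosed) (W : V) :
    P.bracket (P.c • P.xi) W = P.c • P.bracket P.xi W := by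
  rw [← P.torsion_free, ← P.torsion_free, P.nabla_smull, P.nabla_leibniz, P.act_c hΦ,
    zero_smul, zero_add, smul_sub]

lemma twoDeta_phi_phi (hΦ : P.PhiClosed) (X Y : V) :
    P.twoDeta (P.phi X) (P.phi Y) = - P.eta (P.bracket (P.phi X) (P.phi Y)) := by
  rw [twoDeta, P.eta_phi, P.eta_phi, P.act_c_mul_eta hΦ, P.act_c_mul_eta hΦ]
  ring

lemma eta_bracket_phi_phi (hN : P.Normal) (X Y : V) :
    P.eta (P.bracket (P.phi X) (P.phi Y))
      = P.twoDeta X Y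
        + P.c * (P.eta (P.bracket (P.phi X) Y) + P.eta (P.bracket X (P.phi Y))) := by
  have h := congrArg P.eta (hN X Y)
  simp only [nij, P.eta_sub, P.eta_add, P.eta_smul, P.eta_zero, P.eta_xi, P.eta_phi] at h
  linear_combination h - P.eta (P.bracket X Y) * P.c_mul_self

lemma twoDeta_xi_left (hQ : P.QPS) (Y : V) : P.twoDeta P.xi Y = 0 := by
  have h := P.eta_bracket_phi_phi hQ.1 P.xi Y
  rw [P.phi_xi, P.bracket_c_smul_xi hQ.2, P.bracket_c_smul_xi hQ.2, P.eta_smul,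
    P.eta_smul] at h
  linear_combination -h - P.eta (P.bracket P.xi Y) * P.c_mul_self

lemma eta_bracket_xi_left (hQ : P.QPS) (Y : V) :
    P.eta (P.bracket P.xi Y) = P.act P.xi (P.eta Y) := by
  have h := P.twoDeta_xi_left hQ Y
  rw [twoDeta, P.eta_xi, P.act_one] at h
  linear_combination -h

lemma eta_nabla_xi_left (hQ : P.QPS) (Y : V) :
    P.eta (P.nabla P.xi Y) = P.act P.xi (P.eta Y) := by
  rw [P.nabla_xi, P.eta_add, P.eta_bracket_xi_left hQ, P.eta_A, add_zero]

lemma nabla_xi_xi (hQ : P.QPS) : P.nabla P.xi P.xi = 0 := by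
  refine P.g_nondeg _ fun Z => ?_
  have h := P.metric_compat P.xi P.xi Z
  rw [P.g_symm P.xi, P.g_xi, P.g_symm P.xi, P.g_xi, P.eta_nabla_xi_left hQ] at h
  linear_combination -h

lemma bracket_xi_phi (hQ : P.QPS) (Y : V) :
    P.bracket P.xi (P.phi Y) = P.phi (P.bracket P.xi Y) := by
  set U := P.bracket P.xi Y
  set W := P.bracket P.xi (P.phi Y)
  have hnij : P.phi (P.phi U) - P.phi W + P.c • (W - P.phi U) = 0 := by
    have h := hQ.1 P.xi Y
    rw [P.twoDeta_xi_left hQ, zero_smul, sub_zero, nij, P.phi_xi, P.bracket_c_smul_xi hQ.2,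
      P.bracket_c_smul_xi hQ.2, P.phi_smul] at h
    rw [← h, smul_sub]
    abel
  -- multiplying by `c` (recall `c² = 0`) and then applying `φ` isolates `φ³ U = φ² W`
  have hc : P.c • P.phi (P.phi U) = P.c • P.phi W := by
    have h := congrArg (P.c • ·) hnij
    simp only [smul_add, smul_sub, smul_smul, P.c_mul_self, zero_smul, sub_zero, add_zero,
      smul_zero] at h
    exact sub_eq_zero.mp h
  have h3 : P.phi (P.phi (P.phi U)) = P.phi (P.phi W) := by
    have h := congrArg P.phi hnij
    rw [P.phi_add, P.phi_sub, P.phi_smul, P.phi_sub, smul_sub, hc, sub_self, add_zero,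
      P.phi_zero] at h
    exact sub_eq_zero.mp h
  have hU : P.eta (P.phi U) = 0 := by
    rw [P.eta_phi, P.eta_bracket_xi_left hQ, P.c_mul_act_eta hQ.2]
  have hW : P.eta W = 0 := by
    rw [P.eta_bracket_xi_left hQ, P.eta_phi, P.act_c_mul_eta hQ.2]
  rw [P.phi_sq, P.phi_sq, hU, hW] at h3
  simpa using h3.symm

lemma g_A_phi_right_add (hQ : P.QPS) (Y Z : V) :
    P.g (P.A Y) (P.phi Z) + P.g (P.A (P.phi Z)) Y
      = P.c * (P.g (P.A Z) Y - P.g (P.A Y) Z) := by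
  have h := hQ.2 P.xi Y Z
  have hξ : ∀ X, P.g P.xi (P.phi X) = P.c * P.eta X := fun X => by
    rw [P.g_symm, P.g_xi, P.eta_phi]
  have hYZ : P.g (P.bracket Y Z) (P.phi P.xi)
      = P.c * P.g (P.A Z) Y - P.c * P.g (P.A Y) Z := by
    rw [P.phi_xi, P.g_smulr, P.g_xi, P.c_mul_eta_bracket hQ.2]
  simp only [Phi, hξ, P.act_c_mul_eta hQ.2, hYZ] at h
  have hderiv := P.metric_compat P.xi Y (P.phi Z)
  rw [P.nabla_xi, P.nabla_xi, P.bracket_xi_phi hQ, P.g_addl, P.g_addr] at hderiv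
  have hswap := P.g_phi_left (P.bracket P.xi Z) Y
  have hc : P.c * P.eta (P.bracket P.xi Z) = 0 := by
    rw [P.eta_bracket_xi_left hQ, P.c_mul_act_eta hQ.2]
  linear_combination h - hderiv - P.g_symm Y (P.A (P.phi Z))
    - P.g_symm Y (P.phi (P.bracket P.xi Z)) - hswap - 2 * P.eta Y * hc

lemma A_phi_phi (hQ : P.QPS) (Z : V) : P.A (P.phi (P.phi Z)) = P.A Z := by
  rw [A, A, P.phi_sq, P.nabla_subl, P.nabla_smull, P.nabla_xi_xi hQ, smul_zero, sub_zero]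

lemma g_A_phi_phi (X Z : V) : P.g (P.A X) (P.phi (P.phi Z)) = P.g (P.A X) Z := by
  rw [P.phi_sq, P.g_subr, P.g_smulr, P.g_A_xi, mul_zero, sub_zero]

lemma g_A_phi_symm (hQ : P.QPS) (Y Z : V) :
    P.g (P.A (P.phi Y)) Z + P.g (P.A Y) (P.phi Z)
      = P.g (P.A (P.phi Z)) Y + P.g (P.A Z) (P.phi Y) := by
  have hN := P.eta_bracket_phi_phi hQ.1 Y (P.phi Z)
  have hΦ := P.twoDeta_phi_phi hQ.2 Y (P.phi Z)
  have hd := P.twoDeta_eq (P.phi Y) (P.phi (P.phi Z))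
  have hd' := P.twoDeta_eq Y (P.phi Z)
  -- the two `c`-terms of `hN` cancel: `c η [φY, φZ] = c · 2dη(Y, Z) = -c η [Y, φ² Z]`
  have hNc := P.eta_bracket_phi_phi hQ.1 Y Z
  have hdc := P.twoDeta_eq Y Z
  have hc := P.c_mul_eta_bracket hQ.2 Y (P.phi (P.phi Z))
  rw [P.A_phi_phi hQ, P.g_A_phi_phi] at hd hc
  linear_combination -hd - hd' + hΦ - hN - P.c * hNc - P.c * hdc - hc
    - (P.eta (P.bracket (P.phi Y) Z) + P.eta (P.bracket Y (P.phi Z))) * P.c_mul_self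

lemma g_A_phi_left_add (hQ : P.QPS) (Y Z : V) :
    P.g (P.A (P.phi Y)) Z + P.g (P.A Y) (P.phi Z) = 0 := by
  apply eq_zero_of_add_self_eq_zero
  linear_combination P.g_A_phi_symm hQ Y Z + P.g_A_phi_right_add hQ Y Z
    + P.g_A_phi_right_add hQ Z Y

lemma A_phi (hQ : P.QPS) (Y : V) : P.A (P.phi Y) = P.phi (P.A Y) := by
  refine sub_eq_zero.mp (P.g_nondeg _ fun Z => ?_)
  rw [P.g_subl, P.g_phi_left, P.eta_A]
  linear_combination P.g_A_phi_left_add hQ Y Z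

end QPSCtx

theorem stmt4 {C V : Type*} [CommRing C] [Algebra ℝ C] [AddCommGroup V] [Module C V]
    (P : QPSCtx C V) (h : P.QPS) :
    (∀ Y, P.nabla P.xi (P.phi Y) - P.phi (P.nabla P.xi Y) = 0) ∧
    P.nabla P.xi P.xi = 0 ∧
    (∀ Y, P.act P.xi (P.eta Y) - P.eta (P.nabla P.xi Y) = 0) := by
  refine ⟨fun Y => ?_, P.nabla_xi_xi h, fun Y => by rw [P.eta_nabla_xi_left h, sub_self]⟩
  rw [sub_eq_zero, P.nabla_xi, P.nabla_xi, P.phi_add, P.bracket_xi_phi h, P.A_phi h]
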